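/- Let A be a commutative ring and M an A-module. By the universal property of the symmetric algebra there is a unique A-algebra homomorphism Sym_A(M) → Γ_A(M) restricting to the identity on M in degree one; this homomorphism sends m^k to k!·m^{[k]} for every m ∈ M and k ≥ 0. If moreover A is a ℚ-algebra, this homomorphism is an isomorphism of graded A-algebras; in particular for every k the induced map Sym_A^k(M) → Γ_k(M) is an isomorphism of A-modules. -/

import Mathlib

/-!
The comparison map is forced by the universal property of `Sym`, and `k! • m^[k] = (m^[1])^k`
follows by induction from `m^[k] * m^[1] = (k + 1) • m^[k+1]`. Over a `ℚ`-algebra,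
`m ↦ m^k / k!` is a system of divided powers on any algebra receiving `M` linearly, so the
universal property of `Γ` yields an inverse `m^[k] ↦ m^k / k!`. Both algebras are generated by
their degree-one parts, which therefore determine every graded piece as a power; since the
isomorphism matches the degree-one parts, it matches all graded pieces.
-/

open scoped TensorProduct

universe u v

/-- A system of divided powers on a module `M` with values in a commutative `A`-algebra `B`. -/
structure IsDPSystem (A : Type u) [CommRing A] {M : Type v} [AddCommGroup M] [Module A M]
    {B : Type*} [CommRing B] [Algebra A B] (φ : ℕ → M → B) : Prop where
  zero : ∀ m, φ 0 m = 1
  smul : ∀ (k : ℕ) (a : A) (m : M), φ k (a • m) = a ^ k • φ k m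
  add : ∀ (k : ℕ) (m n : M),
    φ k (m + n) = ∑ ij ∈ Finset.HasAntidiagonal.antidiagonal k, φ ij.1 m * φ ij.2 n
  mul : ∀ (i j : ℕ) (m : M), φ i m * φ j m = ((i + j).choose i) • φ (i + j) m

/-- The divided power algebra `Γ_A(M)`, presented as a graded commutative `A`-algebra
equipped with divided power operations `dpow k : M → Γ_k`, universal among commutative
`A`-algebras receiving a system of divided powers of `M`. -/
structure DividedPowerAlgebraModel (A : Type u) [CommRing A] (M : Type v) [AddCommGroup M]
    [Module A M] where
  Γ : Type (max u v)
  [commRing : CommRing Γ]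
  [algebra : Algebra A Γ]
  grading : ℕ → Submodule A Γ
  [gradedAlgebra : GradedAlgebra grading]
  dpow : ℕ → M → Γ
  dpow_mem : ∀ (k : ℕ) (m : M), dpow k m ∈ grading k
  isDP : IsDPSystem A dpow
  dpow_one_injective : Function.Injective (dpow 1)
  grading_one_eq : grading 1 = Submodule.span A (Set.range (dpow 1))
  lift : ∀ {B : Type (max u v)} [CommRing B] [Algebra A B] (φ : ℕ → M → B),
      IsDPSystem A φ → (Γ →ₐ[A] B)
  lift_dpow : ∀ {B : Type (max u v)} [CommRing B] [Algebra A B] (φ : ℕ → M → B)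
      (h : IsDPSystem A φ) (k : ℕ) (m : M), lift φ h (dpow k m) = φ k m
  lift_unique : ∀ {B : Type (max u v)} [CommRing B] [Algebra A B] (φ : ℕ → M → B)
      (h : IsDPSystem A φ) (g : Γ →ₐ[A] B), (∀ k m, g (dpow k m) = φ k m) → g = lift φ h

attribute [instance] DividedPowerAlgebraModel.commRing DividedPowerAlgebraModel.algebra
  DividedPowerAlgebraModel.gradedAlgebra

/-- The symmetric algebra `Sym_A(M)`, presented as a graded commutative `A`-algebra
containing `M` as the degree-one piece, universal among commutative `A`-algebras
receiving an `A`-linear map from `M`. -/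
structure SymmetricAlgebraModel (A : Type u) [CommRing A] (M : Type v) [AddCommGroup M]
    [Module A M] where
  S : Type (max u v)
  [commRing : CommRing S]
  [algebra : Algebra A S]
  grading : ℕ → Submodule A S
  [gradedAlgebra : GradedAlgebra grading]
  ι : M →ₗ[A] S
  ι_injective : Function.Injective ι
  grading_one_eq : grading 1 = LinearMap.range ι
  lift : ∀ {B : Type (max u v)} [CommRing B] [Algebra A B], (M →ₗ[A] B) → (S →ₐ[A] B)
  lift_ι : ∀ {B : Type (max u v)} [CommRing B] [Algebra A B] (f : M →ₗ[A] B) (m : M),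
      lift f (ι m) = f m
  lift_unique : ∀ {B : Type (max u v)} [CommRing B] [Algebra A B] (f : M →ₗ[A] B)
      (g : S →ₐ[A] B), (∀ m, g (ι m) = f m) → g = lift f

attribute [instance] SymmetricAlgebraModel.commRing SymmetricAlgebraModel.algebra
  SymmetricAlgebraModel.gradedAlgebra

namespace IsDPSystem

variable {A : Type*} [CommRing A] {M : Type*} [AddCommGroup M] [Module A M]
  {B : Type*} [CommRing B] [Algebra A B] {φ : ℕ → M → B}

def toLinearMap (h : IsDPSystem A φ) : M →ₗ[A] B where
  toFun := φ 1
  map_add' m n := by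
    rw [h.add 1 m n, Finset.Nat.antidiagonal_succ, Finset.sum_cons, Finset.Nat.antidiagonal_zero,
      Finset.sum_map, Finset.sum_singleton]
    simp [h.zero, add_comm]
  map_smul' a m := by simpa using h.smul 1 a m

@[simp]
theorem toLinearMap_apply (h : IsDPSystem A φ) (m : M) : h.toLinearMap m = φ 1 m := rfl

theorem pow_eq_factorial_smul (h : IsDPSystem A φ) (k : ℕ) (m : M) :
    φ 1 m ^ k = k.factorial • φ k m := by
  induction k with
  | zero => simp [h.zero]
  | succ k ih =>
    rw [pow_succ, ih, smul_mul_assoc, h.mul k 1 m, Nat.choose_succ_self_right, smul_smul,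
      Nat.factorial_succ, mul_comm (k + 1)]

theorem map {C : Type*} [CommRing C] [Algebra A C] (h : IsDPSystem A φ) (g : B →ₐ[A] C) :
    IsDPSystem A (fun k m => g (φ k m)) where
  zero m := by rw [h.zero, map_one]
  smul k a m := by rw [h.smul, map_smul]
  add k m n := by simp only [h.add, map_sum, map_mul]
  mul i j m := by rw [← map_mul, h.mul, map_nsmul]

end IsDPSystem

theorem inv_factorial_mul_inv_factorial (i j : ℕ) :
    ((i.factorial : ℚ))⁻¹ * ((j.factorial : ℚ))⁻¹ =
      ((i + j).choose i : ℚ) * (((i + j).factorial : ℚ))⁻¹ := by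
  rw [Nat.cast_add_choose]
  field_simp

section RatDPow

variable {A : Type*} [CommRing A] [Algebra ℚ A] {M : Type*} [AddCommGroup M] [Module A M]
  {B : Type*} [CommRing B] [Algebra A B]

def ratDPow (L : M →ₗ[A] B) (k : ℕ) (m : M) : B :=
  algebraMap ℚ A ((k.factorial : ℚ))⁻¹ • L m ^ k

theorem ratDPow_one (L : M →ₗ[A] B) (m : M) : ratDPow L 1 m = L m := by
  simp [ratDPow]

theorem AlgHom.map_ratDPow {C : Type*} [CommRing C] [Algebra A C] (f : B →ₐ[A] C)
    (L : M →ₗ[A] B) (k : ℕ) (m : M) :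
    f (ratDPow L k m) = ratDPow (f.toLinearMap ∘ₗ L) k m := by
  simp [ratDPow]

theorem algebraMap_inv_factorial_mul (i j : ℕ) :
    algebraMap ℚ A ((i.factorial : ℚ))⁻¹ * algebraMap ℚ A ((j.factorial : ℚ))⁻¹ =
      ((i + j).choose i : A) * algebraMap ℚ A (((i + j).factorial : ℚ))⁻¹ := by
  rw [← map_mul, inv_factorial_mul_inv_factorial, map_mul, map_natCast]

theorem isDPSystem_ratDPow (L : M →ₗ[A] B) : IsDPSystem A (ratDPow L) where
  zero m := by simp [ratDPow]
  smul k a m := by simp only [ratDPow, map_smul, smul_pow]; rw [smul_comm]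
  add k m n := by
    simp only [ratDPow, map_add, (Commute.all (L m) (L n)).add_pow', Finset.smul_sum]
    refine Finset.sum_congr rfl fun ij hij => ?_
    obtain ⟨i, j⟩ := ij
    obtain rfl : i + j = k := Finset.HasAntidiagonal.mem_antidiagonal.mp hij
    rw [smul_mul_smul_comm, algebraMap_inv_factorial_mul, ← Nat.cast_smul_eq_nsmul A, smul_smul,
      mul_comm]
  mul i j m := by
    rw [ratDPow, ratDPow, ratDPow, smul_mul_smul_comm, ← pow_add, algebraMap_inv_factorial_mul,
      ← Nat.cast_smul_eq_nsmul A, smul_smul]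

theorem IsDPSystem.ratDPow_toLinearMap {φ : ℕ → M → B} (h : IsDPSystem A φ) :
    ratDPow h.toLinearMap = φ := by
  ext k m
  rw [ratDPow, h.toLinearMap_apply, h.pow_eq_factorial_smul, ← Nat.cast_smul_eq_nsmul A,
    smul_smul, ← map_natCast (algebraMap ℚ A), ← map_mul,
    inv_mul_cancel₀ (Nat.cast_ne_zero.mpr k.factorial_ne_zero), map_one, one_smul]

end RatDPow

section Graded

variable {A : Type*} [CommRing A] {R : Type*} [CommRing R] [Algebra A R]

theorem Algebra.adjoin_toSubmodule_le_iSup_pow (Q : Submodule A R) :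
    Subalgebra.toSubmodule (Algebra.adjoin A (Q : Set R)) ≤ ⨆ k, Q ^ k := by
  intro x hx
  induction hx using Algebra.adjoin_induction with
  | mem x hx => exact Submodule.mem_iSup_of_mem 1 (by rwa [pow_one])
  | algebraMap r => exact Submodule.mem_iSup_of_mem 0 (by simp)
  | add x y _ _ hx hy => exact add_mem hx hy
  | mul x y _ _ hx hy =>
    have hle : (⨆ i, Q ^ i) * (⨆ j, Q ^ j) ≤ ⨆ k, Q ^ k := by
      simp only [Submodule.iSup_mul, Submodule.mul_iSup, ← pow_add]
      exact iSup_le fun i => iSup_le fun j => le_iSup (Q ^ ·) (j + i)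
    exact hle (Submodule.mul_mem_mul hx hy)

variable {ι : Type*} [DecidableEq ι] [AddMonoid ι] (𝒜 : ι → Submodule A R)
  [GradedAlgebra 𝒜]

theorem GradedAlgebra.proj_mem_of_mem_iSup {P : ι → Submodule A R}
    (hP : ∀ i, P i ≤ 𝒜 i) {x : R} (hx : x ∈ ⨆ i, P i) (k : ι) :
    GradedAlgebra.proj 𝒜 k x ∈ P k := by
  induction hx using Submodule.iSup_induction' with
  | mem i y hy =>
    rw [GradedAlgebra.proj_apply]
    by_cases hik : i = k
    · subst hik
      rwa [DirectSum.decompose_of_mem_same 𝒜 (hP i hy)]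
    · rw [DirectSum.decompose_of_mem_ne 𝒜 (hP i hy) hik]
      exact zero_mem _
  | zero => simp
  | add y z _ _ hy hz => rw [map_add]; exact add_mem hy hz

end Graded

section GeneratedInDegreeOne

variable {A : Type*} [CommRing A] {R : Type*} [CommRing R] [Algebra A R]
  (𝒜 : ℕ → Submodule A R) [GradedAlgebra 𝒜]

theorem GradedAlgebra.pow_one_le (k : ℕ) : 𝒜 1 ^ k ≤ 𝒜 k := by
  induction k with
  | zero => exact Submodule.one_le.mpr SetLike.GradedOne.one_mem
  | succ k ih =>
    rw [pow_succ]
    exact Submodule.mul_le.mpr fun x hx y hy => SetLike.mul_mem_graded (ih hx) hy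

theorem GradedAlgebra.eq_pow_one_of_adjoin_eq_top (h : Algebra.adjoin A (𝒜 1 : Set R) = ⊤)
    (k : ℕ) : 𝒜 k = 𝒜 1 ^ k := by
  refine le_antisymm (fun x hx => ?_) (GradedAlgebra.pow_one_le 𝒜 k)
  have hx' : x ∈ ⨆ n, 𝒜 1 ^ n :=
    Algebra.adjoin_toSubmodule_le_iSup_pow (𝒜 1) (by simp [h])
  have hproj := GradedAlgebra.proj_mem_of_mem_iSup 𝒜 (GradedAlgebra.pow_one_le 𝒜) hx' k
  rwa [GradedAlgebra.proj_apply, DirectSum.decompose_of_mem_same 𝒜 hx] at hproj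

theorem GradedAlgebra.map_eq_of_surjective {S : Type*} [CommRing S] [Algebra A S]
    (ℬ : ℕ → Submodule A S) [GradedAlgebra ℬ] (h : Algebra.adjoin A (𝒜 1 : Set R) = ⊤)
    (f : R →ₐ[A] S) (hf : Function.Surjective f)
    (h1 : Submodule.map f.toLinearMap (𝒜 1) = ℬ 1) (k : ℕ) :
    Submodule.map f.toLinearMap (𝒜 k) = ℬ k := by
  have hℬ : Algebra.adjoin A (ℬ 1 : Set S) = ⊤ := by
    rw [← h1, Submodule.map_coe, AlgHom.coe_toLinearMap, ← AlgHom.map_adjoin, h,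
      Algebra.map_top, (AlgHom.range_eq_top f).mpr hf]
  rw [GradedAlgebra.eq_pow_one_of_adjoin_eq_top 𝒜 h, Submodule.map_pow, h1,
    ← GradedAlgebra.eq_pow_one_of_adjoin_eq_top ℬ hℬ]

end GeneratedInDegreeOne

namespace SymmetricAlgebraModel

variable {A : Type u} [CommRing A] {M : Type v} [AddCommGroup M] [Module A M]
  (Sym : SymmetricAlgebraModel A M)

theorem algHom_ext {B : Type (max u v)} [CommRing B] [Algebra A B] {g₁ g₂ : Sym.S →ₐ[A] B}
    (h : ∀ m, g₁ (Sym.ι m) = g₂ (Sym.ι m)) : g₁ = g₂ :=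
  (Sym.lift_unique (g₂.toLinearMap ∘ₗ Sym.ι) g₁ h).trans
    (Sym.lift_unique _ g₂ fun _ => rfl).symm

theorem adjoin_range_ι : Algebra.adjoin A (Set.range Sym.ι) = ⊤ := by
  set T := Algebra.adjoin A (Set.range Sym.ι)
  let ιT : M →ₗ[A] T := Sym.ι.codRestrict (Subalgebra.toSubmodule T)
    fun m => Algebra.subset_adjoin ⟨m, rfl⟩
  have hsection : T.val.comp (Sym.lift ιT) = AlgHom.id A Sym.S :=
    Sym.algHom_ext fun m => by rw [AlgHom.comp_apply, Sym.lift_ι]; rfl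
  refine Algebra.eq_top_iff.mpr fun x => ?_
  rw [← AlgHom.id_apply (R := A) x, ← hsection]
  exact (Sym.lift ιT x).2

theorem adjoin_grading_one : Algebra.adjoin A (Sym.grading 1 : Set Sym.S) = ⊤ := by
  rw [Sym.grading_one_eq, LinearMap.coe_range, adjoin_range_ι]

end SymmetricAlgebraModel

theorem DividedPowerAlgebraModel.algHom_ext {A : Type u} [CommRing A] {M : Type v}
    [AddCommGroup M] [Module A M] (G : DividedPowerAlgebraModel A M) {B : Type (max u v)}
    [CommRing B] [Algebra A B] {g₁ g₂ : G.Γ →ₐ[A] B}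
    (h : ∀ k m, g₁ (G.dpow k m) = g₂ (G.dpow k m)) : g₁ = g₂ :=
  (G.lift_unique _ (G.isDP.map g₂) g₁ h).trans (G.lift_unique _ _ g₂ fun _ _ => rfl).symm

section Comparison

variable {A : Type u} [CommRing A] {M : Type v} [AddCommGroup M] [Module A M]
  {Sym : SymmetricAlgebraModel A M} {G : DividedPowerAlgebraModel A M}
  {f : Sym.S →ₐ[A] G.Γ}

theorem comp_ι_eq_toLinearMap (hf : ∀ m : M, f (Sym.ι m) = G.dpow 1 m) :
    f.toLinearMap ∘ₗ Sym.ι = G.isDP.toLinearMap :=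
  LinearMap.ext hf

theorem map_grading_one_eq (hf : ∀ m : M, f (Sym.ι m) = G.dpow 1 m) :
    Submodule.map f.toLinearMap (Sym.grading 1) = G.grading 1 := by
  rw [Sym.grading_one_eq, G.grading_one_eq, ← LinearMap.range_comp,
    comp_ι_eq_toLinearMap hf, ← Submodule.span_eq (LinearMap.range _),
    LinearMap.coe_range]
  rfl

theorem bijective_of_map_ι_eq_dpow_one [Algebra ℚ A]
    (hf : ∀ m : M, f (Sym.ι m) = G.dpow 1 m) :
    Function.Bijective f := by
  let g : G.Γ →ₐ[A] Sym.S := G.lift (ratDPow Sym.ι) (isDPSystem_ratDPow Sym.ι)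
  have hgf : g.comp f = AlgHom.id A Sym.S := Sym.algHom_ext fun m => by
    rw [AlgHom.comp_apply, hf, G.lift_dpow, ratDPow_one, AlgHom.id_apply]
  have hfg : f.comp g = AlgHom.id A G.Γ := G.algHom_ext fun k m => by
    rw [AlgHom.comp_apply, G.lift_dpow, AlgHom.map_ratDPow, comp_ι_eq_toLinearMap hf,
      G.isDP.ratDPow_toLinearMap, AlgHom.id_apply]
  exact Function.bijective_iff_has_inverse.mpr
    ⟨g, DFunLike.congr_fun hgf, DFunLike.congr_fun hfg⟩

end Comparison

/-- There is a unique `A`-algebra homomorphism `Sym_A(M) → Γ_A(M)`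
restricting to the identity on `M` in degree one; it sends `m^k` to `k!·m^{[k]}`.
If moreover `A` is a `ℚ`-algebra, it is an isomorphism of graded `A`-algebras; in
particular each `Sym^k_A(M) → Γ_k(M)` is an isomorphism of `A`-modules. -/
theorem symmetricAlgebra_toDividedPowerAlgebra
    {A : Type u} [CommRing A] {M : Type v} [AddCommGroup M] [Module A M]
    (Sym : SymmetricAlgebraModel A M) (G : DividedPowerAlgebraModel A M) :
    (∃! f : Sym.S →ₐ[A] G.Γ, ∀ m : M, f (Sym.ι m) = G.dpow 1 m) ∧
    (∀ f : Sym.S →ₐ[A] G.Γ, (∀ m : M, f (Sym.ι m) = G.dpow 1 m) →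
      (∀ (k : ℕ) (m : M), f (Sym.ι m ^ k) = k.factorial • G.dpow k m) ∧
      (∀ _ : Algebra ℚ A,
        Function.Bijective f ∧
        (∀ k : ℕ, Submodule.map f.toLinearMap (Sym.grading k) = G.grading k) ∧
        (∀ k : ℕ, ∃ g : Sym.grading k ≃ₗ[A] G.grading k,
          ∀ x : Sym.grading k, (g x : G.Γ) = f (x : Sym.S)))) := by
  refine ⟨⟨Sym.lift G.isDP.toLinearMap, Sym.lift_ι _, fun g hg => Sym.lift_unique _ g hg⟩,
    fun f hf => ⟨fun k m => ?_, fun _ => ?_⟩⟩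
  · rw [map_pow, hf, G.isDP.pow_eq_factorial_smul]
  have hbij : Function.Bijective f := bijective_of_map_ι_eq_dpow_one hf
  have hmap (k : ℕ) : Submodule.map f.toLinearMap (Sym.grading k) = G.grading k :=
    GradedAlgebra.map_eq_of_surjective Sym.grading G.grading Sym.adjoin_grading_one f hbij.2
      (map_grading_one_eq hf) k
  exact ⟨hbij, hmap, fun k =>
    ⟨(Submodule.equivMapOfInjective _ hbij.1 _).trans (LinearEquiv.ofEq _ _ (hmap k)),
      fun _ => rfl⟩⟩
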